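/- Suppose the potential is stable in a weak sense: Q(r) ≥ 0 for every r ∈ LC⁺, there exists a nonzero r* ∈ LC⁺ with Q(r*) = 0, and for every nonzero r ∈ LC⁺ with Q(r) = 0 one has ⟨A, r⟩ < 0 (the quadratic part increases along every flat direction of the quartic part). Then V has at most one nontrivial critical point on LC⁺, and if such a point r exists, it is a global minimum point of V on LC⁺ (V(r) ≤ V(s) for all s ∈ LC⁺). -/
import Mathlib

set_option maxHeartbeats 1000000


open Matrix

/-- The forward lightcone in ℝ⁴. -/
def LCplus : Set (Fin 4 → ℝ) :=
  {r | 0 ≤ r 0 ∧ (r 0) ^ 2 = (r 1) ^ 2 + (r 2) ^ 2 + (r 3) ^ 2}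

/-- Minkowski metric diag(1, −1, −1, −1). -/
def eta : Matrix (Fin 4) (Fin 4) ℝ := Matrix.diagonal ![1, -1, -1, -1]

/-- Minkowski inner product ⟨x, y⟩ = x₀y₀ − x₁y₁ − x₂y₂ − x₃y₃. -/
def minkDot (x y : Fin 4 → ℝ) : ℝ :=
  x 0 * y 0 - x 1 * y 1 - x 2 * y 2 - x 3 * y 3

/-- The quadratic form associated to a 4×4 matrix. -/
def Q (B : Matrix (Fin 4) (Fin 4) ℝ) (r : Fin 4 → ℝ) : ℝ := r ⬝ᵥ B.mulVec r

/-- The Landau potential. -/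
noncomputable def V (B : Matrix (Fin 4) (Fin 4) ℝ) (A : Fin 4 → ℝ) (r : Fin 4 → ℝ) : ℝ :=
  -minkDot A r + (1 / 2) * Q B r

/-- Nontrivial critical points of the Landau potential on LC⁺ (Lagrange
multiplier condition). -/
def IsCritPt (B : Matrix (Fin 4) (Fin 4) ℝ) (A : Fin 4 → ℝ) (r : Fin 4 → ℝ) : Prop :=
  r ∈ LCplus ∧ r ≠ 0 ∧ ∃ lam : ℝ, B.mulVec r = lam • eta.mulVec r + eta.mulVec A

def Blin (B : Matrix (Fin 4) (Fin 4) ℝ) (x y : Fin 4 → ℝ) : ℝ := x ⬝ᵥ B.mulVec y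

lemma Blin_expand (B : Matrix (Fin 4) (Fin 4) ℝ) (x y : Fin 4 → ℝ) :
    Blin B x y =
      x 0 * (B 0 0 * y 0 + B 0 1 * y 1 + B 0 2 * y 2 + B 0 3 * y 3) +
      x 1 * (B 1 0 * y 0 + B 1 1 * y 1 + B 1 2 * y 2 + B 1 3 * y 3) +
      x 2 * (B 2 0 * y 0 + B 2 1 * y 1 + B 2 2 * y 2 + B 2 3 * y 3) +
      x 3 * (B 3 0 * y 0 + B 3 1 * y 1 + B 3 2 * y 2 + B 3 3 * y 3) := by
  simp [Blin, Matrix.mulVec, dotProduct, Fin.sum_univ_four]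

lemma Q_eq_Blin (B : Matrix (Fin 4) (Fin 4) ℝ) (x : Fin 4 → ℝ) : Q B x = Blin B x x := rfl

lemma dot_eta (x y : Fin 4 → ℝ) : x ⬝ᵥ eta.mulVec y = minkDot x y := by
  simp [eta, Matrix.mulVec, dotProduct, Fin.sum_univ_four, Matrix.diagonal, minkDot]
  ring

lemma vec4_ne_zero (x : Fin 4 → ℝ) (hx : x ≠ 0) :
    ¬ (x 0 = 0 ∧ x 1 = 0 ∧ x 2 = 0 ∧ x 3 = 0) := by
  rintro ⟨h0, h1, h2, h3⟩
  apply hx; funext i; fin_cases i <;> simpa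

lemma lc_pos (x : Fin 4 → ℝ) (hx : x ∈ LCplus) (hne : x ≠ 0) : 0 < x 0 := by
  obtain ⟨h0, hsq⟩ := hx
  rcases lt_or_eq_of_le h0 with h | h
  · exact h
  · exfalso
    apply vec4_ne_zero x hne
    have h1 : x 1 = 0 := by nlinarith [sq_nonneg (x 1), sq_nonneg (x 2), sq_nonneg (x 3)]
    have h2 : x 2 = 0 := by nlinarith [sq_nonneg (x 1), sq_nonneg (x 2), sq_nonneg (x 3)]
    have h3 : x 3 = 0 := by nlinarith [sq_nonneg (x 1), sq_nonneg (x 2), sq_nonneg (x 3)]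
    exact ⟨h.symm, h1, h2, h3⟩

lemma mink_nonneg (x y : Fin 4 → ℝ) (hx : x ∈ LCplus) (hy : y ∈ LCplus) :
    0 ≤ minkDot x y := by
  obtain ⟨hx0, hxs⟩ := hx
  obtain ⟨hy0, hys⟩ := hy
  unfold minkDot
  nlinarith [sq_nonneg (x 1 * y 2 - x 2 * y 1), sq_nonneg (x 1 * y 3 - x 3 * y 1),
    sq_nonneg (x 2 * y 3 - x 3 * y 2), mul_nonneg hx0 hy0,
    sq_nonneg (x 0 * y 0 + (x 1 * y 1 + x 2 * y 2 + x 3 * y 3))]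

lemma mink_self (x : Fin 4 → ℝ) (hx : x ∈ LCplus) : minkDot x x = 0 := by
  obtain ⟨_, hxs⟩ := hx
  unfold minkDot; nlinarith [hxs]

lemma parallel_of_mink_zero (x y : Fin 4 → ℝ) (hx : x ∈ LCplus) (hy : y ∈ LCplus)
    (hxne : x ≠ 0) (hyne : y ≠ 0) (h : minkDot x y = 0) :
    y = (y 0 / x 0) • x := by
  obtain ⟨hx0, hxs⟩ := hx
  obtain ⟨hy0, hys⟩ := hy
  have hx0' : 0 < x 0 := lc_pos x ⟨hx0, hxs⟩ hxne
  unfold minkDot at h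
  have key : (x 1 * y 2 - x 2 * y 1)^2 + (x 1 * y 3 - x 3 * y 1)^2 +
      (x 2 * y 3 - x 3 * y 2)^2 = 0 := by
    linear_combination (-(y 1^2 + y 2^2 + y 3^2)) * hxs - (x 0^2) * hys +
      (x 0 * y 0 + (x 1 * y 1 + x 2 * y 2 + x 3 * y 3)) * h
  have h12 : x 1 * y 2 - x 2 * y 1 = 0 := by
    have : (x 1 * y 2 - x 2 * y 1)^2 = 0 := by
      nlinarith [sq_nonneg (x 1 * y 3 - x 3 * y 1), sq_nonneg (x 2 * y 3 - x 3 * y 2)]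
    exact pow_eq_zero_iff (by norm_num) |>.mp this
  have h13 : x 1 * y 3 - x 3 * y 1 = 0 := by
    have : (x 1 * y 3 - x 3 * y 1)^2 = 0 := by
      nlinarith [sq_nonneg (x 1 * y 2 - x 2 * y 1), sq_nonneg (x 2 * y 3 - x 3 * y 2)]
    exact pow_eq_zero_iff (by norm_num) |>.mp this
  have h23 : x 2 * y 3 - x 3 * y 2 = 0 := by
    have : (x 2 * y 3 - x 3 * y 2)^2 = 0 := by
      nlinarith [sq_nonneg (x 1 * y 2 - x 2 * y 1), sq_nonneg (x 1 * y 3 - x 3 * y 1)]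
    exact pow_eq_zero_iff (by norm_num) |>.mp this
  have e1 : y 1 * x 0 = y 0 * x 1 := by
    apply mul_right_cancel₀ (ne_of_gt hx0')
    linear_combination y 1 * hxs - x 1 * h - x 2 * h12 - x 3 * h13
  have e2 : y 2 * x 0 = y 0 * x 2 := by
    apply mul_right_cancel₀ (ne_of_gt hx0')
    linear_combination y 2 * hxs - x 2 * h + x 1 * h12 - x 3 * h23
  have e3 : y 3 * x 0 = y 0 * x 3 := by
    apply mul_right_cancel₀ (ne_of_gt hx0')
    linear_combination y 3 * hxs - x 3 * h + x 1 * h13 + x 2 * h23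
  funext i
  fin_cases i
  · show y 0 = (y 0 / x 0) * x 0
    field_simp
  · show y 1 = (y 0 / x 0) * x 1
    rw [div_mul_eq_mul_div, eq_div_iff (ne_of_gt hx0')]
    linarith [e1]
  · show y 2 = (y 0 / x 0) * x 2
    rw [div_mul_eq_mul_div, eq_div_iff (ne_of_gt hx0')]
    linarith [e2]
  · show y 3 = (y 0 / x 0) * x 3
    rw [div_mul_eq_mul_div, eq_div_iff (ne_of_gt hx0')]
    linarith [e3]

lemma eta_mulVec (x : Fin 4 → ℝ) : eta.mulVec x = ![x 0, -x 1, -x 2, -x 3] := by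
  funext i
  fin_cases i <;>
    simp [eta, Matrix.mulVec, dotProduct, Fin.sum_univ_four, Matrix.diagonal] <;> ring

lemma flat_first_order (B : Matrix (Fin 4) (Fin 4) ℝ) (hB : B.IsSymm)
    (hnn : ∀ r ∈ LCplus, 0 ≤ Q B r)
    (e : Fin 4 → ℝ) (he : e ∈ LCplus) (hne : e ≠ 0) (hQ0 : Q B e = 0) :
    ∃ σ : ℝ, B.mulVec e = σ • eta.mulVec e := by
  have hsy : ∀ i j : Fin 4, B i j = B j i := fun i j => hB.apply j i
  have hρ : 0 < e 0 := lc_pos e he hne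
  obtain ⟨he0, hsq⟩ := he
  have hQ0e := hQ0
  rw [Q_eq_Blin, Blin_expand] at hQ0e
  obtain ⟨p, hp⟩ : ∃ p, p = B 0 0 * e 0 + B 0 1 * e 1 + B 0 2 * e 2 + B 0 3 * e 3 := ⟨_, rfl⟩
  obtain ⟨v1, hv1⟩ : ∃ z, z = B 0 1 * e 0 + B 1 1 * e 1 + B 1 2 * e 2 + B 1 3 * e 3 := ⟨_, rfl⟩
  obtain ⟨v2, hv2⟩ : ∃ z, z = B 0 2 * e 0 + B 1 2 * e 1 + B 2 2 * e 2 + B 2 3 * e 3 := ⟨_, rfl⟩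
  obtain ⟨v3, hv3⟩ : ∃ z, z = B 0 3 * e 0 + B 1 3 * e 1 + B 2 3 * e 2 + B 3 3 * e 3 := ⟨_, rfl⟩
  obtain ⟨u1, hu1⟩ : ∃ z, z = e 0 * v1 + p * e 1 := ⟨_, rfl⟩
  obtain ⟨u2, hu2⟩ : ∃ z, z = e 0 * v2 + p * e 2 := ⟨_, rfl⟩
  obtain ⟨u3, hu3⟩ : ∃ z, z = e 0 * v3 + p * e 3 := ⟨_, rfl⟩
  obtain ⟨m, hm⟩ : ∃ z, z = u1 ^ 2 + u2 ^ 2 + u3 ^ 2 := ⟨_, rfl⟩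
  have hQ0v : e 0 * p + e 1 * v1 + e 2 * v2 + e 3 * v3 = 0 := by
    rw [hp, hv1, hv2, hv3]
    linear_combination hQ0e + e 0 * e 1 * hsy 0 1 + e 0 * e 2 * hsy 0 2 + e 0 * e 3 * hsy 0 3 +
      e 1 * e 2 * hsy 1 2 + e 1 * e 3 * hsy 1 3 + e 2 * e 3 * hsy 2 3
  have hortho : e 1 * u1 + e 2 * u2 + e 3 * u3 = 0 := by
    linear_combination e 1 * hu1 + e 2 * hu2 + e 3 * hu3 + e 0 * hQ0v - p * hsq
  have huv : e 0 * (u1 * v1 + u2 * v2 + u3 * v3) = m := by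
    linear_combination (-1 : ℝ) * hm - p * hortho - u1 * hu1 - u2 * hu2 - u3 * hu3
  have hm0 : (0:ℝ) ≤ m := by rw [hm]; positivity
  have hmv0 : (B.mulVec e) 0 = p := by
    simp [Matrix.mulVec, dotProduct, Fin.sum_univ_four]
    rw [hp]
  have hmv1 : (B.mulVec e) 1 = v1 := by
    simp [Matrix.mulVec, dotProduct, Fin.sum_univ_four]
    rw [hv1]; linear_combination e 0 * hsy 1 0
  have hmv2 : (B.mulVec e) 2 = v2 := by
    simp [Matrix.mulVec, dotProduct, Fin.sum_univ_four]
    rw [hv2]; linear_combination e 0 * hsy 2 0 + e 1 * hsy 2 1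
  have hmv3 : (B.mulVec e) 3 = v3 := by
    simp [Matrix.mulVec, dotProduct, Fin.sum_univ_four]
    rw [hv3]; linear_combination e 0 * hsy 3 0 + e 1 * hsy 3 1 + e 2 * hsy 3 2
  by_cases hmz : m = 0
  · -- the gradient vanishes; σ = p / e 0 works
    rw [hm] at hmz
    have hz1 : u1 = 0 := by
      have h2 : u1 ^ 2 = 0 := by linarith [sq_nonneg u1, sq_nonneg u2, sq_nonneg u3, hmz]
      exact pow_eq_zero_iff (by norm_num : (2:ℕ) ≠ 0) |>.mp h2
    have hz2 : u2 = 0 := by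
      have h2 : u2 ^ 2 = 0 := by linarith [sq_nonneg u2, sq_nonneg u1, sq_nonneg u3, hmz]
      exact pow_eq_zero_iff (by norm_num : (2:ℕ) ≠ 0) |>.mp h2
    have hz3 : u3 = 0 := by
      have h2 : u3 ^ 2 = 0 := by linarith [sq_nonneg u3, sq_nonneg u1, sq_nonneg u2, hmz]
      exact pow_eq_zero_iff (by norm_num : (2:ℕ) ≠ 0) |>.mp h2
    refine ⟨p / e 0, ?_⟩
    rw [eta_mulVec]
    funext i
    fin_cases i
    · show (B.mulVec e) 0 = (p / e 0) * e 0
      rw [hmv0]; field_simp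
    · show (B.mulVec e) 1 = (p / e 0) * (-e 1)
      rw [hmv1, div_mul_eq_mul_div, eq_div_iff (ne_of_gt hρ)]
      rw [hu1] at hz1; linarith
    · show (B.mulVec e) 2 = (p / e 0) * (-e 2)
      rw [hmv2, div_mul_eq_mul_div, eq_div_iff (ne_of_gt hρ)]
      rw [hu2] at hz2; linarith
    · show (B.mulVec e) 3 = (p / e 0) * (-e 3)
      rw [hmv3, div_mul_eq_mul_div, eq_div_iff (ne_of_gt hρ)]
      rw [hu3] at hz3; linarith
  · exfalso
    have hmpos : 0 < m := lt_of_le_of_ne hm0 (Ne.symm hmz)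
    obtain ⟨LL0, hLL0⟩ : ∃ z, z = 2*(B 0 1 * e 1 + B 0 2 * e 2 + B 0 3 * e 3) := ⟨_, rfl⟩
    obtain ⟨LL1, hLL1⟩ : ∃ z, z = 2*(B 0 1 * u1 + B 0 2 * u2 + B 0 3 * u3) := ⟨_, rfl⟩
    obtain ⟨C, hC⟩ : ∃ z, z = B 0 0 * m + (B 1 1 * u1^2 + B 2 2 * u2^2 + B 3 3 * u3^2 +
      2*B 1 2 * u1*u2 + 2*B 1 3 * u1*u3 + 2*B 2 3 * u2*u3) := ⟨_, rfl⟩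
    obtain ⟨D, hD⟩ : ∃ z, z = |LL0| + |LL1| := ⟨_, rfl⟩
    obtain ⟨K, hK⟩ : ∃ z, z = 2 * |e 0 * C| + m * D := ⟨_, rfl⟩
    have hD0 : 0 ≤ D := by rw [hD]; positivity
    have hK0 : 0 ≤ K := by
      rw [hK]
      have h1 := abs_nonneg (e 0 * C)
      have h2 := mul_nonneg hm0 hD0
      linarith only [h1, h2]
    obtain ⟨ε, hε⟩ : ∃ z, z = -(min 1 (2*m/(K+1))) := ⟨_, rfl⟩
    have hKp : (0:ℝ) < K + 1 := by linarith only [hK0]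
    have hεneg : ε < 0 := by
      rw [hε]; simp only [neg_neg, Left.neg_neg_iff]
      exact lt_min one_pos (by positivity)
    have hε1 : -1 ≤ ε := by
      rw [hε]; exact neg_le_neg (min_le_left _ _)
    have hεK : -ε * (K+1) ≤ 2*m := by
      rw [hε, neg_neg]
      have h1 : min 1 (2*m/(K+1)) ≤ 2*m/(K+1) := min_le_right _ _
      calc min 1 (2*m/(K+1)) * (K+1) ≤ (2*m/(K+1)) * (K+1) :=
            mul_le_mul_of_nonneg_right h1 (le_of_lt hKp)
        _ = 2*m := div_mul_cancel₀ _ (ne_of_gt hKp)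
    have habsε : |ε| ≤ 1 := abs_le.mpr ⟨hε1, by linarith only [hεneg]⟩
    obtain ⟨t, ht⟩ : ∃ z, z = Real.sqrt (e 0^2 + ε^2*m) := ⟨_, rfl⟩
    have ht0 : 0 ≤ t := by rw [ht]; exact Real.sqrt_nonneg _
    have ht2 : t^2 = e 0^2 + ε^2*m := by
      rw [ht, Real.sq_sqrt]; positivity
    have htlb : e 0 ≤ t := by
      rw [ht]
      calc e 0 = Real.sqrt (e 0^2) := (Real.sqrt_sq hρ.le).symm
        _ ≤ Real.sqrt (e 0^2 + ε^2*m) := by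
            apply Real.sqrt_le_sqrt
            have := mul_nonneg (sq_nonneg ε) hm0
            linarith only [this]
    have htd : 0 ≤ t - e 0 := by linarith only [htlb]
    have htub : (t - e 0)*(2*e 0) ≤ ε^2*m := by
      have h1 : (t - e 0)*(2*e 0) ≤ (t - e 0)*(t + e 0) :=
        mul_le_mul_of_nonneg_left (by linarith only [htlb]) htd
      have h2 : (t - e 0)*(t + e 0) = ε^2*m := by linear_combination ht2
      linarith only [h1, h2]
    obtain ⟨s, hsdef⟩ : ∃ z : Fin 4 → ℝ, z = ![t, e 1 + ε*u1, e 2 + ε*u2, e 3 + ε*u3] :=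
      ⟨_, rfl⟩
    have hs0 : s 0 = t := by rw [hsdef]; rfl
    have hs1 : s 1 = e 1 + ε*u1 := by rw [hsdef]; rfl
    have hs2 : s 2 = e 2 + ε*u2 := by rw [hsdef]; rfl
    have hs3 : s 3 = e 3 + ε*u3 := by rw [hsdef]; rfl
    have hsmem : s ∈ LCplus := by
      constructor
      · rw [hs0]; exact ht0
      · rw [hs0, hs1, hs2, hs3]
        linear_combination ht2 + hsq + ε^2*hm - 2*ε*hortho
    have hQs : 0 ≤ Blin B s s := by rw [← Q_eq_Blin]; exact hnn s hsmem
    have hsplit : Blin B s s =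
        (B 0 0*(e 0^2 + ε^2*m) + e 0*(LL0 + ε*LL1) +
          (B 1 1*(e 1 + ε*u1)^2 + B 2 2*(e 2 + ε*u2)^2 + B 3 3*(e 3 + ε*u3)^2 +
           2*B 1 2*(e 1 + ε*u1)*(e 2 + ε*u2) + 2*B 1 3*(e 1 + ε*u1)*(e 3 + ε*u3) +
           2*B 2 3*(e 2 + ε*u2)*(e 3 + ε*u3))) +
        (t - e 0)*(LL0 + ε*LL1) := by
      rw [Blin_expand, hs0, hs1, hs2, hs3, hLL0, hLL1]
      linear_combination (B 0 0)*ht2 + t*(e 1 + ε*u1)*hsy 1 0 + t*(e 2 + ε*u2)*hsy 2 0 +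
        t*(e 3 + ε*u3)*hsy 3 0 + (e 1 + ε*u1)*(e 2 + ε*u2)*hsy 2 1 +
        (e 1 + ε*u1)*(e 3 + ε*u3)*hsy 3 1 + (e 2 + ε*u2)*(e 3 + ε*u3)*hsy 3 2
    have hJ : e 0 * (B 0 0*(e 0^2 + ε^2*m) + e 0*(LL0 + ε*LL1) +
          (B 1 1*(e 1 + ε*u1)^2 + B 2 2*(e 2 + ε*u2)^2 + B 3 3*(e 3 + ε*u3)^2 +
           2*B 1 2*(e 1 + ε*u1)*(e 2 + ε*u2) + 2*B 1 3*(e 1 + ε*u1)*(e 3 + ε*u3) +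
           2*B 2 3*(e 2 + ε*u2)*(e 3 + ε*u3))) = 2*ε*m + ε^2*(e 0 * C) := by
      rw [hLL0, hLL1, hC]
      linear_combination e 0 * hQ0v + 2*ε*huv - e 0^2*hp - e 0*(e 1 + 2*ε*u1)*hv1 -
        e 0*(e 2 + 2*ε*u2)*hv2 - e 0*(e 3 + 2*ε*u3)*hv3
    have hLLb : LL0 + ε*LL1 ≤ D := by
      rw [hD]
      have h1 : ε*LL1 ≤ |LL1| := by
        calc ε*LL1 ≤ |ε*LL1| := le_abs_self _
          _ = |ε| * |LL1| := abs_mul _ _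
          _ ≤ 1 * |LL1| := mul_le_mul_of_nonneg_right habsε (abs_nonneg _)
          _ = |LL1| := one_mul _
      linarith only [le_abs_self LL0, h1]
    have hstep1 : (t - e 0)*(LL0 + ε*LL1)*(2*e 0) ≤ ε^2*m*D := by
      have h1 : (t - e 0)*(LL0 + ε*LL1) ≤ (t - e 0)*D :=
        mul_le_mul_of_nonneg_left hLLb htd
      have h3 := mul_le_mul_of_nonneg_right h1 (by linarith only [hρ] : (0:ℝ) ≤ 2*e 0)
      have h2 := mul_le_mul_of_nonneg_right htub hD0
      calc (t - e 0)*(LL0 + ε*LL1)*(2*e 0) ≤ (t - e 0)*D*(2*e 0) := h3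
        _ = ((t - e 0)*(2*e 0))*D := by ring
        _ ≤ (ε^2*m)*D := h2
        _ = ε^2*m*D := by ring
    have h4 : 2*e 0*Blin B s s = 2*(2*ε*m + ε^2*(e 0 * C)) +
        (t - e 0)*(LL0 + ε*LL1)*(2*e 0) := by
      rw [hsplit, ← hJ]; ring
    have h0 : 0 ≤ 2*e 0 * Blin B s s := mul_nonneg (by linarith only [hρ]) hQs
    have hCb : 2*ε^2*(e 0 * C) ≤ 2*ε^2 * |e 0 * C| :=
      mul_le_mul_of_nonneg_left (le_abs_self _) (by positivity)
    have hfin : 0 ≤ 4*ε*m + ε^2*K := by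
      rw [hK]
      linarith only [h0, h4, hstep1, hCb]
    have hKK : 0 < 4*m + ε*K := by linarith only [hεK, hεneg, hmpos]
    have hprod : ε*(4*m + ε*K) < 0 := mul_neg_of_neg_of_pos hεneg hKK
    have hring : 4*ε*m + ε^2*K = ε*(4*m + ε*K) := by ring
    linarith only [hfin, hprod, hring]

lemma mink_symm (x y : Fin 4 → ℝ) : minkDot x y = minkDot y x := by
  unfold minkDot; ring

lemma Blin_symm (B : Matrix (Fin 4) (Fin 4) ℝ) (hB : B.IsSymm) (x y : Fin 4 → ℝ) :
    Blin B x y = Blin B y x := by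
  have hsy : ∀ i j : Fin 4, B i j = B j i := fun i j => hB.apply j i
  rw [Blin_expand, Blin_expand]
  linear_combination x 0*y 1*hsy 0 1 + x 0*y 2*hsy 0 2 + x 0*y 3*hsy 0 3 +
    x 1*y 0*hsy 1 0 + x 1*y 2*hsy 1 2 + x 1*y 3*hsy 1 3 +
    x 2*y 0*hsy 2 0 + x 2*y 1*hsy 2 1 + x 2*y 3*hsy 2 3 +
    x 3*y 0*hsy 3 0 + x 3*y 1*hsy 3 1 + x 3*y 2*hsy 3 2

lemma ker_pair (B : Matrix (Fin 4) (Fin 4) ℝ) (e : Fin 4 → ℝ) (σ : ℝ)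
    (heq : B.mulVec e = σ • eta.mulVec e) (w : Fin 4 → ℝ) :
    Blin B w e = σ * minkDot w e := by
  have h0 := congrFun heq 0
  have h1 := congrFun heq 1
  have h2 := congrFun heq 2
  have h3 := congrFun heq 3
  rw [eta_mulVec] at h0 h1 h2 h3
  simp at h0 h1 h2 h3
  unfold Blin minkDot
  simp only [dotProduct, Fin.sum_univ_four]
  rw [h0, h1, h2, h3]
  ring

lemma null_nonneg (B : Matrix (Fin 4) (Fin 4) ℝ) (hnn : ∀ r ∈ LCplus, 0 ≤ Q B r)
    (x : Fin 4 → ℝ) (hx : minkDot x x = 0) : 0 ≤ Blin B x x := by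
  unfold minkDot at hx
  rcases le_or_gt 0 (x 0) with h | h
  · have hmem : x ∈ LCplus := ⟨h, by nlinarith [hx]⟩
    have := hnn x hmem
    rwa [Q_eq_Blin] at this
  · have hmem : (-x) ∈ LCplus := by
      constructor
      · show (0:ℝ) ≤ -x 0
        linarith
      · show (-x) 0 ^ 2 = (-x) 1 ^ 2 + (-x) 2 ^ 2 + (-x) 3 ^ 2
        simp only [Pi.neg_apply]
        nlinarith [hx]
    have hq := hnn (-x) hmem
    rw [Q_eq_Blin, Blin_expand] at hq
    rw [Blin_expand]
    simp only [Pi.neg_apply] at hq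
    nlinarith [hq]

lemma psd_of_flat (B : Matrix (Fin 4) (Fin 4) ℝ) (hB : B.IsSymm)
    (hnn : ∀ r ∈ LCplus, 0 ≤ Q B r)
    (e : Fin 4 → ℝ) (he : e ∈ LCplus) (hne : e ≠ 0) (σ : ℝ)
    (heq : B.mulVec e = σ • eta.mulVec e) :
    ∀ z : Fin 4 → ℝ, σ * minkDot z z ≤ Blin B z z := by
  intro z
  by_contra hlt
  push_neg at hlt
  have hρ : 0 < e 0 := lc_pos e he hne
  -- find w with negative G-value and nonzero minkDot e w
  obtain ⟨w, hw1, hw2⟩ : ∃ w : Fin 4 → ℝ,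
      minkDot e w ≠ 0 ∧ Blin B w w - σ * minkDot w w < 0 := by
    by_cases hμ : minkDot e z ≠ 0
    · exact ⟨z, hμ, by linarith⟩
    · push_neg at hμ
      obtain ⟨a, ha⟩ : ∃ q, q = σ * minkDot z z - Blin B z z := ⟨_, rfl⟩
      have ha0 : 0 < a := by rw [ha]; linarith
      obtain ⟨γ1, hγ1⟩ : ∃ q, q = (2*B 0 0*z 0 + (B 0 1 + B 1 0)*z 1 +
        (B 0 2 + B 2 0)*z 2 + (B 0 3 + B 3 0)*z 3) - σ*(2*z 0) := ⟨_, rfl⟩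
      obtain ⟨γ2, hγ2⟩ : ∃ q, q = B 0 0 - σ := ⟨_, rfl⟩
      obtain ⟨τ, hτ⟩ : ∃ q, q = min 1 (a/(|γ1| + |γ2| + 1)) := ⟨_, rfl⟩
      have hden : (0:ℝ) < |γ1| + |γ2| + 1 := by
        have := abs_nonneg γ1; have := abs_nonneg γ2; linarith
      have hτ0 : 0 < τ := by rw [hτ]; exact lt_min one_pos (by positivity)
      have hτ1 : τ ≤ 1 := by rw [hτ]; exact min_le_left _ _
      have hτa : τ * (|γ1| + |γ2| + 1) ≤ a := by
        have h1 : τ ≤ a/(|γ1| + |γ2| + 1) := by rw [hτ]; exact min_le_right _ _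
        calc τ * (|γ1| + |γ2| + 1) ≤ (a/(|γ1| + |γ2| + 1)) * (|γ1| + |γ2| + 1) :=
              mul_le_mul_of_nonneg_right h1 (le_of_lt hden)
          _ = a := div_mul_cancel₀ _ (ne_of_gt hden)
      refine ⟨![z 0 + τ, z 1, z 2, z 3], ?_, ?_⟩
      · show minkDot e ![z 0 + τ, z 1, z 2, z 3] ≠ 0
        have : minkDot e ![z 0 + τ, z 1, z 2, z 3] = minkDot e z + τ * e 0 := by
          unfold minkDot; simp; ring
        rw [this, hμ]
        have : 0 < τ * e 0 := mul_pos hτ0 hρ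
        linarith
      · have hG : Blin B ![z 0 + τ, z 1, z 2, z 3] ![z 0 + τ, z 1, z 2, z 3] -
            σ * minkDot ![z 0 + τ, z 1, z 2, z 3] ![z 0 + τ, z 1, z 2, z 3] =
            (Blin B z z - σ * minkDot z z) + τ*γ1 + τ^2*γ2 := by
          rw [Blin_expand, Blin_expand, hγ1, hγ2]
          unfold minkDot
          simp
          ring
        have e1 : τ*γ1 ≤ τ * |γ1| := mul_le_mul_of_nonneg_left (le_abs_self _) hτ0.le
        have hττ : τ^2 ≤ τ := by nlinarith [hτ0, hτ1]
        have e2a : τ^2*γ2 ≤ τ^2 * |γ2| := mul_le_mul_of_nonneg_left (le_abs_self _) (sq_nonneg _)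
        have e2b : τ^2 * |γ2| ≤ τ * |γ2| := mul_le_mul_of_nonneg_right hττ (abs_nonneg _)
        have hbound : τ*γ1 + τ^2*γ2 < a := by
          have : τ * |γ1| + τ * |γ2| + τ = τ * (|γ1| + |γ2| + 1) := by ring
          linarith [hτa, e1, e2a, e2b, hτ0, this]
        rw [hG]
        linarith [ha, hbound]
  -- build the null vector X = α e + w
  obtain ⟨α, hα⟩ : ∃ q : ℝ, q = -(minkDot w w)/(2*minkDot e w) := ⟨_, rfl⟩
  have hdne : (2:ℝ)*minkDot e w ≠ 0 := mul_ne_zero two_ne_zero hw1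
  have h2am : α*(2*minkDot e w) = -(minkDot w w) := by
    rw [hα]; field_simp
  obtain ⟨X, hX⟩ : ∃ x : Fin 4 → ℝ,
      x = ![α*e 0 + w 0, α*e 1 + w 1, α*e 2 + w 2, α*e 3 + w 3] := ⟨_, rfl⟩
  have hX0 : X 0 = α*e 0 + w 0 := by rw [hX]; rfl
  have hX1 : X 1 = α*e 1 + w 1 := by rw [hX]; rfl
  have hX2 : X 2 = α*e 2 + w 2 := by rw [hX]; rfl
  have hX3 : X 3 = α*e 3 + w 3 := by rw [hX]; rfl
  have hmee : minkDot e e = 0 := mink_self e he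
  have hXnull : minkDot X X = 0 := by
    have hexp : minkDot X X = α^2*minkDot e e + α*(2*minkDot e w) + minkDot w w := by
      unfold minkDot
      rw [hX0, hX1, hX2, hX3]
      ring
    rw [hexp, hmee, h2am]; ring
  have hBwe : Blin B w e = σ * minkDot w e := ker_pair B e σ heq w
  have hBe : Blin B e e = 0 := by
    have h := ker_pair B e σ heq e
    rw [hmee] at h
    simpa using h
  have hBew : Blin B e w = σ * minkDot w e := by
    rw [Blin_symm B hB]; exact hBwe
  have hexpB : Blin B X X = α^2*Blin B e e + α*Blin B e w + α*Blin B w e + Blin B w w := by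
    simp only [Blin_expand]
    rw [hX0, hX1, hX2, hX3]
    ring
  have hGX : 0 ≤ Blin B X X := null_nonneg B hnn X hXnull
  have hmwe : minkDot w e = minkDot e w := mink_symm w e
  have hBee2 : α^2*Blin B e e = 0 := by rw [hBe]; ring
  have hBew2 : α*Blin B e w = α*(σ*minkDot e w) := by rw [hBew, hmwe]
  have hBwe2 : α*Blin B w e = α*(σ*minkDot e w) := by rw [hBwe, hmwe]
  have hσ2 : σ*(α*(2*minkDot e w)) = σ*(-(minkDot w w)) := by rw [h2am]
  nlinarith [hexpB, hBee2, hBew2, hBwe2, hσ2, hGX, hw2]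

lemma crit_pair (B : Matrix (Fin 4) (Fin 4) ℝ) (A r : Fin 4 → ℝ) (lam : ℝ)
    (hcrit : B.mulVec r = lam • eta.mulVec r + eta.mulVec A) (x : Fin 4 → ℝ) :
    Blin B x r = lam * minkDot x r + minkDot x A := by
  unfold Blin
  rw [hcrit]
  have h : x ⬝ᵥ (lam • eta.mulVec r + eta.mulVec A) =
      lam * (x ⬝ᵥ eta.mulVec r) + x ⬝ᵥ eta.mulVec A := by
    simp [dotProduct, Fin.sum_univ_four]; ring
  rw [h, dot_eta, dot_eta]

lemma Q_smul (B : Matrix (Fin 4) (Fin 4) ℝ) (c : ℝ) (x : Fin 4 → ℝ) :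
    Q B (c • x) = c^2 * Q B x := by
  rw [Q_eq_Blin, Q_eq_Blin]
  simp only [Blin_expand, Pi.smul_apply, smul_eq_mul]
  ring

/-- A potential stable in a weak sense has at most one nontrivial critical point
on LC⁺, which, if it exists, is a global minimum point of V on LC⁺. -/
theorem weak_stability_unique_minimum
    (B : Matrix (Fin 4) (Fin 4) ℝ) (hB : B.IsSymm)
    (A : Fin 4 → ℝ)
    (hnn : ∀ r ∈ LCplus, 0 ≤ Q B r)
    (hflat : ∃ rstar ∈ LCplus, rstar ≠ 0 ∧ Q B rstar = 0)
    (hA : ∀ r ∈ LCplus, r ≠ 0 → Q B r = 0 → minkDot A r < 0) :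
    {r : Fin 4 → ℝ | IsCritPt B A r}.Subsingleton ∧
    ∀ r : Fin 4 → ℝ, IsCritPt B A r → ∀ s ∈ LCplus, V B A r ≤ V B A s := by
  obtain ⟨est, hestLC, hestne, hestQ⟩ := hflat
  obtain ⟨σ, hσeq⟩ := flat_first_order B hB hnn est hestLC hestne hestQ
  have hpsd := psd_of_flat B hB hnn est hestLC hestne σ hσeq
  have bound : ∀ r : Fin 4 → ℝ, r ∈ LCplus → r ≠ 0 → ∀ lam : ℝ,
      B.mulVec r = lam • eta.mulVec r + eta.mulVec A →
      σ < lam ∧ minkDot r A = Q B r ∧ 0 < Q B r ∧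
      ∀ s ∈ LCplus, V B A r + (lam - σ) * minkDot r s ≤ V B A s := by
    intro r hrLC hrne lam hcrit
    have hmrr : minkDot r r = 0 := mink_self r hrLC
    have hAr : minkDot r A = Q B r := by
      have h := crit_pair B A r lam hcrit r
      rw [hmrr, Q_eq_Blin] at *
      linarith [h]
    have hQr0 : 0 ≤ Q B r := hnn r hrLC
    have hQrpos : 0 < Q B r := by
      rcases lt_or_eq_of_le hQr0 with h | h
      · exact h
      · exfalso
        have h2 := hA r hrLC hrne h.symm
        rw [mink_symm A r, hAr] at h2
        linarith
    have hblin_er : Blin B est r = σ * minkDot est r := by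
      rw [Blin_symm B hB, ker_pair B est σ hσeq r, mink_symm r est]
    have hcp := crit_pair B A r lam hcrit est
    have hAest : minkDot A est < 0 := hA est hestLC hestne hestQ
    have hmer : 0 ≤ minkDot est r := mink_nonneg est r hestLC hrLC
    have hmsAe : minkDot est A = minkDot A est := mink_symm est A
    have hprod : (lam - σ) * minkDot est r = - minkDot A est := by
      linear_combination hblin_er - hcp - hmsAe
    have hσlam : σ < lam := by
      by_contra hcon
      push_neg at hcon
      have h1 : 0 ≤ (σ - lam) * minkDot est r :=
        mul_nonneg (by linarith) hmer
      nlinarith [hprod, hAest, h1]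
    refine ⟨hσlam, hAr, hQrpos, ?_⟩
    intro s hsLC
    have hpd := hpsd (s - r)
    have hdd : minkDot (s-r) (s-r) = -2*minkDot r s := by
      have h1 : minkDot (s-r) (s-r) = minkDot s s - 2*minkDot r s + minkDot r r := by
        unfold minkDot; simp only [Pi.sub_apply]; ring
      rw [h1, mink_self s hsLC, mink_self r hrLC]; ring
    have hBd : Blin B (s-r) (s-r) = Blin B s s - 2*Blin B s r + Blin B r r := by
      have h1 : Blin B (s-r) (s-r) = Blin B s s - Blin B s r - Blin B r s + Blin B r r := by
        simp only [Blin_expand, Pi.sub_apply]; ring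
      rw [h1, Blin_symm B hB r s]; ring
    have hsr := crit_pair B A r lam hcrit s
    have hmrs : 0 ≤ minkDot r s := mink_nonneg r s hrLC hsLC
    have hmul : 0 ≤ (lam - σ) * minkDot r s := mul_nonneg (by linarith) hmrs
    have hσdd : σ * minkDot (s-r) (s-r) = σ * (-2*minkDot r s) := by rw [hdd]
    have hVr : V B A r = -minkDot A r + (1/2)*Blin B r r := by rw [V, Q_eq_Blin]
    have hVs : V B A s = -minkDot A s + (1/2)*Blin B s s := by rw [V, Q_eq_Blin]
    have hArB : minkDot r A = Blin B r r := by rw [hAr, Q_eq_Blin]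
    have hm1 : minkDot A r = minkDot r A := mink_symm A r
    have hm2 : minkDot A s = minkDot s A := mink_symm A s
    have hlam3 : lam * minkDot s r = lam * minkDot r s := by rw [mink_symm s r]
    linarith [hpd, hσdd, hBd, hsr, hArB, hVr, hVs, hm1, hm2, hlam3]
  constructor
  · intro r1 h1 r2 h2
    obtain ⟨hr1LC, hr1ne, lam1, hlam1⟩ := h1
    obtain ⟨hr2LC, hr2ne, lam2, hlam2⟩ := h2
    obtain ⟨hσ1, hAr1, hQ1, hb1⟩ := bound r1 hr1LC hr1ne lam1 hlam1
    obtain ⟨hσ2, hAr2, hQ2, hb2⟩ := bound r2 hr2LC hr2ne lam2 hlam2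
    have h12 := hb1 r2 hr2LC
    have h21 := hb2 r1 hr1LC
    have hm12 : 0 ≤ minkDot r1 r2 := mink_nonneg r1 r2 hr1LC hr2LC
    have hmsym : minkDot r2 r1 = minkDot r1 r2 := mink_symm r2 r1
    have ha : (lam1 - σ) * minkDot r1 r2 = 0 := by
      have hnn1 : 0 ≤ (lam1 - σ) * minkDot r1 r2 := mul_nonneg (by linarith) hm12
      have hnn2 : 0 ≤ (lam2 - σ) * minkDot r2 r1 :=
        mul_nonneg (by linarith) (by rw [hmsym]; exact hm12)
      linarith [h12, h21, hnn1, hnn2]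
    have hm0 : minkDot r1 r2 = 0 := by
      rcases mul_eq_zero.mp ha with h | h
      · exfalso; linarith
      · exact h
    have hpar := parallel_of_mink_zero r1 r2 hr1LC hr2LC hr1ne hr2ne hm0
    have hc : 0 < r2 0 / r1 0 := div_pos (lc_pos r2 hr2LC hr2ne) (lc_pos r1 hr1LC hr1ne)
    have hVeq : V B A r1 = V B A r2 := by
      have t1 : (lam1 - σ) * minkDot r1 r2 = 0 := ha
      have t2 : (lam2 - σ) * minkDot r2 r1 = 0 := by
        rw [hmsym]
        have : minkDot r1 r2 = 0 := hm0
        rw [this]; ring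
      linarith [h12, h21, t1, t2]
    have hQr2 : Q B r2 = (r2 0 / r1 0)^2 * Q B r1 := by
      conv_lhs => rw [hpar]
      rw [Q_smul]
    have hVQ1 : V B A r1 = -(1/2) * Q B r1 := by
      rw [V, mink_symm A r1, hAr1]; ring
    have hVQ2 : V B A r2 = -(1/2) * Q B r2 := by
      rw [V, mink_symm A r2, hAr2]; ring
    have hc2 : (r2 0 / r1 0)^2 = 1 := by
      have : Q B r1 = (r2 0 / r1 0)^2 * Q B r1 := by
        rw [← hQr2]
        nlinarith [hVeq, hVQ1, hVQ2]
      nlinarith [this, hQ1]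
    have hc1 : r2 0 / r1 0 = 1 := by
      have hfac : (r2 0 / r1 0 - 1) * (r2 0 / r1 0 + 1) = 0 := by linear_combination hc2
      rcases mul_eq_zero.mp hfac with h | h
      · linarith
      · linarith
    rw [hpar, hc1, one_smul]
  · intro r hcrit s hsLC
    obtain ⟨hrLC, hrne, lam, hlam⟩ := hcrit
    obtain ⟨hσl, _, _, hb⟩ := bound r hrLC hrne lam hlam
    have h1 := hb s hsLC
    have h2 : 0 ≤ (lam - σ) * minkDot r s :=
      mul_nonneg (by linarith) (mink_nonneg r s hrLC hsLC)
    linarith
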